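/- arXiv:nlin/0003038 — 2 statements merged into one kernel-verified Lean document; each statement's English description precedes it below -/
import Mathlib

section
/- For all positive integers A and B, the sum H(A,B) = Σ_{p=0}^{min(A,B)} (-1)^{A+B-p-1} (A+B-p-1)! · A!·B! / ((A-p)!·(B-p)!·p!) equals zero. -/
open Finset fwdDiff

/-- The B-th forward difference of `x ↦ C(x, B-1)` vanishes, expressed as an
alternating sum identity in `ℤ`. -/
lemma key_int (A B : ℕ) (hB : 0 < B) :
    ∑ k ∈ Finset.range (B + 1),
      (-1 : ℤ) ^ (B - k) * (B.choose k) * ((A - 1 + k).choose (B - 1)) = 0 := by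
  have h := fwdDiff_iter_eq_sum_shift (1 : ℕ)
    (fun x => ((x.choose (B - 1)) : ℤ)) B (A - 1)
  have hL : (Δ_[(1:ℕ)])^[B] (fun x => ((x.choose (B - 1)) : ℤ)) (A - 1) = 0 := by
    obtain ⟨b, rfl⟩ : ∃ b, B = b + 1 := ⟨B - 1, by omega⟩
    rw [Function.iterate_succ_apply']
    have h1 : (Δ_[(1:ℕ)])^[b] (fun x => ((x.choose (b + 1 - 1)) : ℤ)) = fun _ => 1 := by
      have := fwdDiff_iter_choose 0 b
      simpa using this
    rw [h1]
    simp [fwdDiff]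
  rw [hL] at h
  rw [← h.symm]
  apply Finset.sum_congr rfl
  intro k hk
  simp only [smul_eq_mul, nsmul_eq_mul, mul_one]

/-- The same identity in `ℚ`, with the sum written in the forward direction. -/
lemma key_rat (A B : ℕ) (hA : 0 < A) (hB : 0 < B) :
    ∑ p ∈ Finset.range (B + 1),
      (-1 : ℚ) ^ p * (B.choose p) * ((A + B - 1 - p).choose (B - 1)) = 0 := by
  have hrefl := Finset.sum_range_reflect
    (fun p => (-1 : ℚ) ^ p * (B.choose p) * ((A + B - 1 - p).choose (B - 1))) (B + 1)
  rw [← hrefl]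
  have hz := key_int A B hB
  have : ((∑ k ∈ Finset.range (B + 1),
      (-1 : ℤ) ^ (B - k) * (B.choose k) * ((A - 1 + k).choose (B - 1)) : ℤ) : ℚ) = 0 := by
    rw [hz]; norm_num
  push_cast at this
  rw [← this]
  apply Finset.sum_congr rfl
  intro k hk
  rw [Finset.mem_range] at hk
  have hk' : k ≤ B := by omega
  have e1 : B + 1 - 1 - k = B - k := by omega
  have e2 : B.choose (B - k) = B.choose k := Nat.choose_symm hk'
  have e3 : A + B - 1 - (B - k) = A - 1 + k := by omega
  rw [e1, e2, e3]

/-- H(A,B) = Σ_{p=0}^{min(A,B)} (-1)^{A+B-p-1} (A+B-p-1)! A!B!/((A-p)!(B-p)!p!) = 0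
for all positive integers A, B. -/
theorem H_eq_zero (A B : ℕ) (hA : 0 < A) (hB : 0 < B) :
    ∑ p ∈ Finset.range (min A B + 1),
      (-1 : ℚ) ^ (A + B - p - 1) * (Nat.factorial (A + B - p - 1)) *
        ((Nat.factorial A : ℚ) * Nat.factorial B) /
        ((Nat.factorial (A - p) : ℚ) * Nat.factorial (B - p) * Nat.factorial p) = 0 := by
  have hterm : ∀ p ∈ Finset.range (min A B + 1),
      (-1 : ℚ) ^ (A + B - p - 1) * (Nat.factorial (A + B - p - 1)) *
        ((Nat.factorial A : ℚ) * Nat.factorial B) /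
        ((Nat.factorial (A - p) : ℚ) * Nat.factorial (B - p) * Nat.factorial p)
      = ((-1 : ℚ) ^ (A + B - 1) * Nat.factorial A * Nat.factorial (B - 1)) *
        ((-1 : ℚ) ^ p * (B.choose p) * ((A + B - 1 - p).choose (B - 1))) := by
    intro p hp
    rw [Finset.mem_range] at hp
    have hpA : p ≤ A := by omega
    have hpB : p ≤ B := by omega
    -- sign
    have hsign : (-1 : ℚ) ^ (A + B - p - 1) = (-1 : ℚ) ^ (A + B - 1) * (-1 : ℚ) ^ p := by
      have : A + B - 1 = (A + B - p - 1) + p := by omega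
      rw [this, pow_add, mul_assoc, ← pow_add, ← two_mul, pow_mul]
      norm_num
    -- choose casts
    have hc1 : ((B.choose p : ℚ)) = (Nat.factorial B : ℚ) /
        ((Nat.factorial p : ℚ) * Nat.factorial (B - p)) := by
      rw [Nat.cast_choose ℚ hpB]
    have hle : B - 1 ≤ A + B - 1 - p := by omega
    have hc2 : (((A + B - 1 - p).choose (B - 1) : ℚ)) =
        (Nat.factorial (A + B - 1 - p) : ℚ) /
        ((Nat.factorial (B - 1) : ℚ) * Nat.factorial (A - p)) := by
      rw [Nat.cast_choose ℚ hle, show A + B - 1 - p - (B - 1) = A - p from by omega]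
    have hfacs : A + B - p - 1 = A + B - 1 - p := by omega
    rw [hsign, hc1, hc2, hfacs]
    have h1 : (Nat.factorial (A - p) : ℚ) ≠ 0 := by positivity
    have h2 : (Nat.factorial (B - p) : ℚ) ≠ 0 := by positivity
    have h3 : (Nat.factorial p : ℚ) ≠ 0 := by positivity
    have h4 : (Nat.factorial (B - 1) : ℚ) ≠ 0 := by positivity
    field_simp
  rw [Finset.sum_congr rfl hterm, ← Finset.mul_sum]
  have hext : ∑ p ∈ Finset.range (min A B + 1),
      (-1 : ℚ) ^ p * (B.choose p) * ((A + B - 1 - p).choose (B - 1))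
      = ∑ p ∈ Finset.range (B + 1),
      (-1 : ℚ) ^ p * (B.choose p) * ((A + B - 1 - p).choose (B - 1)) := by
    apply Finset.sum_subset
    · intro x hx
      rw [Finset.mem_range] at *
      omega
    · intro x hx hx'
      rw [Finset.mem_range] at *
      have hxA : A < x := by omega
      have : (A + B - 1 - x).choose (B - 1) = 0 := by
        apply Nat.choose_eq_zero_of_lt
        omega
      rw [this]
      simp
  rw [hext, key_rat A B hA hB, mul_zero]
end

section
/- For any positive integer B and A ≥ B, H(A,B) = (1-B)·H(A,B-1), where H(A,B) = Σ_{p=0}^{B} (-1)^{A+B-p-1} (A+B-p-1)!·A!·B!/((A-p)!(B-p)!p!). -/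
private def Tt (A B p : ℕ) : ℚ :=
  (-1 : ℚ) ^ (A + B - p - 1) * (Nat.factorial (A + B - p - 1)) *
    ((Nat.factorial A : ℚ) * Nat.factorial B) /
    ((Nat.factorial (A - p) : ℚ) * Nat.factorial (B - p) * Nat.factorial p)

private def gg (A B p : ℕ) : ℚ :=
  (p : ℚ) * (-1 : ℚ) ^ (A + B - p) * (Nat.factorial (A + B - p - 1)) *
    ((Nat.factorial A : ℚ) * Nat.factorial (B - 1)) /
    ((Nat.factorial (A - p) : ℚ) * Nat.factorial (B - p) * Nat.factorial p)

private lemma key (b d p : ℕ) (hp : p ≤ b) :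
    Tt (b + 1 + d) (b + 1) p - (1 - ((b : ℚ) + 1)) * Tt (b + 1 + d) b p
      = gg (b + 1 + d) (b + 1) (p + 1) - gg (b + 1 + d) (b + 1) p := by
  obtain ⟨c, rfl⟩ := Nat.exists_eq_add_of_le hp
  unfold Tt gg
  have e4 : p + c + 1 + d + (p + c + 1) - (p + 1) - 1 = p + 2 * c + d := by omega
  have e3 : p + c + 1 + d + (p + c + 1) - (p + 1) = p + 2 * c + d + 1 := by omega
  have e1 : p + c + 1 + d + (p + c + 1) - p - 1 = p + 2 * c + d + 1 := by omega
  have e2 : p + c + 1 + d + (p + c + 1) - p = p + 2 * c + d + 2 := by omega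
  have e5 : p + c + 1 + d + (p + c) - p - 1 = p + 2 * c + d := by omega
  have e6 : p + c + 1 + d - p = c + d + 1 := by omega
  have e7 : p + c + 1 - p = c + 1 := by omega
  have e8 : p + c - p = c := by omega
  have e9 : p + c + 1 + d - (p + 1) = c + d := by omega
  have e10 : p + c + 1 - (p + 1) = c := by omega
  have e11 : p + c + 1 - 1 = p + c := by omega
  rw [e4, e3, e1, e2, e5, e6, e7, e8, e9, e10, e11]
  simp only [Nat.factorial_succ, pow_succ]
  have h1 : ((Nat.factorial p : ℚ)) ≠ 0 := Nat.cast_ne_zero.mpr (Nat.factorial_ne_zero _)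
  have h2 : ((Nat.factorial c : ℚ)) ≠ 0 := Nat.cast_ne_zero.mpr (Nat.factorial_ne_zero _)
  have h3 : ((Nat.factorial (c + d) : ℚ)) ≠ 0 := Nat.cast_ne_zero.mpr (Nat.factorial_ne_zero _)
  have h4 : ((Nat.factorial (p + c) : ℚ)) ≠ 0 := Nat.cast_ne_zero.mpr (Nat.factorial_ne_zero _)
  have h5 : ((Nat.factorial (p + 2 * c + d) : ℚ)) ≠ 0 :=
    Nat.cast_ne_zero.mpr (Nat.factorial_ne_zero _)
  have h6 : ((Nat.factorial (p + c + 1 + d) : ℚ)) ≠ 0 :=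
    Nat.cast_ne_zero.mpr (Nat.factorial_ne_zero _)
  have hp1 : ((p : ℚ) + 1) ≠ 0 := by positivity
  have hc1 : ((c : ℚ) + 1) ≠ 0 := by positivity
  have hcd1 : ((c : ℚ) + d + 1) ≠ 0 := by positivity
  have hpc1 : ((p : ℚ) + c + 1) ≠ 0 := by positivity
  generalize ((-1 : ℚ)) ^ (p + 2 * c + d) = s
  push_cast
  field_simp
  ring

private lemma last_term (b d : ℕ) :
    Tt (b + 1 + d) (b + 1) (b + 1) = - gg (b + 1 + d) (b + 1) (b + 1) := by
  unfold Tt gg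
  have e1 : b + 1 + d + (b + 1) - (b + 1) - 1 = b + d := by omega
  have e2 : b + 1 + d + (b + 1) - (b + 1) = b + d + 1 := by omega
  have e3 : b + 1 + d - (b + 1) = d := by omega
  have e4 : b + 1 - (b + 1) = 0 := by omega
  have e5 : b + 1 - 1 = b := by omega
  rw [e1, e2, e3, e4, e5]
  simp only [Nat.factorial_succ, Nat.factorial_zero, pow_succ]
  have h1 : ((Nat.factorial b : ℚ)) ≠ 0 := Nat.cast_ne_zero.mpr (Nat.factorial_ne_zero _)
  have h2 : ((Nat.factorial d : ℚ)) ≠ 0 := Nat.cast_ne_zero.mpr (Nat.factorial_ne_zero _)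
  have hb1 : ((b : ℚ) + 1) ≠ 0 := by positivity
  push_cast
  field_simp

/-- For B ≥ 1 and A ≥ B, H(A,B) = (1-B)·H(A,B-1), where
H(A,B) = Σ_{p=0}^{B} (-1)^{A+B-p-1}(A+B-p-1)! A!B!/((A-p)!(B-p)!p!). -/
theorem H_recursion (A B : ℕ) (hB : 1 ≤ B) (hAB : B ≤ A) :
    (∑ p ∈ Finset.range (B + 1),
      (-1 : ℚ) ^ (A + B - p - 1) * (Nat.factorial (A + B - p - 1)) *
        ((Nat.factorial A : ℚ) * Nat.factorial B) /
        ((Nat.factorial (A - p) : ℚ) * Nat.factorial (B - p) * Nat.factorial p))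
    = ((1 : ℚ) - B) *
      ∑ p ∈ Finset.range ((B - 1) + 1),
        (-1 : ℚ) ^ (A + (B - 1) - p - 1) * (Nat.factorial (A + (B - 1) - p - 1)) *
          ((Nat.factorial A : ℚ) * Nat.factorial (B - 1)) /
          ((Nat.factorial (A - p) : ℚ) * Nat.factorial ((B - 1) - p) * Nat.factorial p) := by
  show (∑ p ∈ Finset.range (B + 1), Tt A B p)
      = (1 - (B : ℚ)) * ∑ p ∈ Finset.range ((B - 1) + 1), Tt A (B - 1) p
  obtain ⟨b, rfl⟩ : ∃ b, B = b + 1 := ⟨B - 1, by omega⟩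
  obtain ⟨d, rfl⟩ : ∃ d, A = b + 1 + d := ⟨A - (b + 1), by omega⟩
  simp only [Nat.add_sub_cancel]
  rw [Finset.sum_range_succ]
  have h2 : ∑ p ∈ Finset.range (b + 1),
      (Tt (b + 1 + d) (b + 1) p - (1 - ((b : ℚ) + 1)) * Tt (b + 1 + d) b p)
      = gg (b + 1 + d) (b + 1) (b + 1) - gg (b + 1 + d) (b + 1) 0 := by
    rw [Finset.sum_congr rfl
      (fun p hp => key b d p (Finset.mem_range_succ_iff.mp hp)),
      Finset.sum_range_sub]
  have h0 : gg (b + 1 + d) (b + 1) 0 = 0 := by simp [gg]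
  have h3 := last_term b d
  rw [h0, sub_zero, Finset.sum_sub_distrib, ← Finset.mul_sum] at h2
  push_cast at h2 ⊢
  linarith [h2, h3]
end
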